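/- Let (X,ρ,μ) be a metric measure space whose measure is Ahlfors d-regular, let T be an idempotent integral operator with kernel K satisfying ‖K‖_{S,θ} < ∞ for some θ ∈ (0,1], let V_p be the range space of T in L^p (1 ≤ p ≤ ∞), let Ω be a bounded domain, and let Γ_Ω ⊆ Ω be a discrete set with Voronoi partition {I_γ} of Ω and with d_H(Γ_Ω,Ω) ≤ 1. For h ∈ V_p define h_I = Σ_{γ∈Γ_Ω} h(γ) χ_{I_γ}. Then ‖h_I − h‖_{L^p(Ω)} ≤ ‖K‖_{S,θ} d_H(Γ_Ω,Ω)^θ ‖h‖_p for every h ∈ V_p. -/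

import Mathlib

open MeasureTheory Metric Set ENNReal Filter

noncomputable section

variable {X : Type*} [MetricSpace X] [MeasurableSpace X]

/-- The measure `μ` is Ahlfors `d`-regular with constants `D₁`, `D₂`. -/
def AhlforsRegular (μ : Measure X) (d D₁ D₂ : ℝ) : Prop :=
  ∀ (x : X) (r : ℝ), 0 ≤ r → ENNReal.ofReal r ≤ EMetric.diam (Set.univ : Set X) →
    ENNReal.ofReal (D₁ * r ^ d) ≤ μ (Metric.closedBall x r) ∧
      μ (Metric.closedBall x r) ≤ ENNReal.ofReal (D₂ * r ^ d)

/-- The Corkscrew condition with ratio `c` for a domain `D`. -/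
def Corkscrew (D : Set X) (c : ℝ) : Prop :=
  ∀ x ∈ frontier D, ∀ r : ℝ, 0 < r → ENNReal.ofReal r ≤ EMetric.diam (frontier D) →
    ∃ y ∈ D, Metric.closedBall y (c * r) ⊆ D ∩ Metric.closedBall x r

/-- Schur-type bound for a nonnegative kernel. -/
def schurBound (μ : Measure X) (A : X → X → ℝ≥0∞) : ℝ≥0∞ :=
  max (⨆ x, ∫⁻ y, A x y ∂μ) (⨆ y, ∫⁻ x, A x y ∂μ)

/-- Schur norm of a kernel `K`. -/
def schurS (μ : Measure X) (K : X → X → ℂ) : ℝ≥0∞ :=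
  schurBound μ (fun x y => (‖K x y‖₊ : ℝ≥0∞))

/-- Modulus of continuity of a kernel. -/
def moc (K : X → X → ℂ) (δ : ℝ) : X → X → ℝ≥0∞ := fun x y =>
  ⨆ x' ∈ Metric.closedBall x δ, ⨆ y' ∈ Metric.closedBall y δ,
    (‖K x' y' - K x y‖₊ : ℝ≥0∞)

/-- The norm `‖K‖_{S,θ}`. -/
def schurSθ (μ : Measure X) (K : X → X → ℂ) (θ : ℝ) : ℝ≥0∞ :=
  schurS μ K + ⨆ δ ∈ Set.Ioc (0:ℝ) 1, ENNReal.ofReal (δ ^ (-θ)) * schurBound μ (moc K δ)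

/-- The integral operator with kernel `K`. -/
def intOp (μ : Measure X) (K : X → X → ℂ) (f : X → ℂ) : X → ℂ :=
  fun x => ∫ y, K x y * f y ∂μ

/-- The range space `V_p` of the integral operator. -/
def VSpace (μ : Measure X) (K : X → X → ℂ) (p : ℝ≥0∞) : Set (X → ℂ) :=
  {f | MemLp f p μ ∧ intOp μ K f = f}

/-- The set of `ε`-concentrated signals on `Ω`. -/
def VConc (μ : Measure X) (K : X → X → ℂ) (p : ℝ≥0∞) (Ω : Set X) (ε : ℝ) : Set (X → ℂ) :=
  {f | f ∈ VSpace μ K p ∧ eLpNorm f p (μ.restrict Ωᶜ) ≤ ENNReal.ofReal ε * eLpNorm f p μ}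

/-- Voronoi partition of a set `A` associated with points `γ`. -/
def IsVoronoi {ι : Type*} (A : Set X) (γ : ι → X) (I : ι → Set X) : Prop :=
  (∀ i, MeasurableSet (I i)) ∧ Pairwise (Function.onFun Disjoint I) ∧
    (⋃ i, I i) = A ∧
    ∀ i, I i ⊆ {x ∈ A | dist x (γ i) = Metric.infDist x (Set.range γ)}

/-- `d_H(Γ, A) = sup_{x ∈ A} ρ(x, Γ)`. -/
def dHaus (Γ A : Set X) : ℝ := ⨆ x ∈ A, Metric.infDist x Γ

/-- The weighted sampling norm `‖(v_γ)‖_{p,μ(Γ)}`. -/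
def sampNorm (μ : Measure X) {ι : Type*} (I : ι → Set X) (p : ℝ≥0∞) (v : ι → ℂ) : ℝ≥0∞ :=
  if p = ∞ then ⨆ i, (‖v i‖₊ : ℝ≥0∞)
  else (∑' i, (‖v i‖₊ : ℝ≥0∞) ^ p.toReal * μ (I i)) ^ (1 / p.toReal)

/-- The preconstruction operator `S_Γ`. -/
def SGamma (μ : Measure X) (K : X → X → ℂ) {ι : Type*} (γ : ι → X) (I : ι → Set X)
    (g : X → ℂ) : X → ℂ :=
  fun x => ∑' i, (μ (I i)).toReal * intOp μ K g (γ i) * K x (γ i)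

/-- Iterative approximation algorithm: `f₀ = S_Γ f`, `f_n = f₀ + f_{n-1} - S_Γ f_{n-1}`. -/
def iterSeq (μ : Measure X) (K : X → X → ℂ) {ι : Type*} (γ : ι → X) (I : ι → Set X)
    (f : X → ℂ) : ℕ → X → ℂ
  | 0 => SGamma μ K γ I f
  | n + 1 => fun x =>
      SGamma μ K γ I f x + iterSeq μ K γ I f n x - SGamma μ K γ I (iterSeq μ K γ I f n) x

/-- Reconstruction algorithm: `g_n = g₀ + g_{n-1} - S_Γ g_{n-1}`. -/
def reconSeq (μ : Measure X) (K : X → X → ℂ) {ι : Type*} (γ : ι → X) (I : ι → Set X)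
    (g₀ : X → ℂ) : ℕ → X → ℂ
  | 0 => g₀
  | n + 1 => fun x =>
      g₀ x + reconSeq μ K γ I g₀ n x - SGamma μ K γ I (reconSeq μ K γ I g₀ n) x

/-- Preconstruction from sampled data `v`: `Σ_γ μ(I_γ) v_γ K(·,γ)`. -/
def preRecon (μ : Measure X) (K : X → X → ℂ) {ι : Type*} (γ : ι → X) (I : ι → Set X)
    (v : ι → ℂ) : X → ℂ :=
  fun x => ∑' i, (μ (I i)).toReal * v i * K x (γ i)

/-! For `x` in the cell of `γ i` we have `h(γ i) - h(x) = ∫ (K(γ i, y) - K(x, y)) h(y) dμ(y)`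
because `h = T h`, and `|K(γ i, y) - K(x, y)| ≤ ω_δ(K)(x, y)` with `δ = d_H(Γ, Ω)` because
`ρ(x, γ i) ≤ δ`. So `|h_I - h|` is dominated by an integral operator applied to `|h|` whose
kernel has Schur norm at most `‖ω_δ(K)‖_S ≤ δ^θ ‖K‖_{S,θ}`, and Schur's test concludes. -/

theorem AhlforsRegular.measure_closedBall_lt_top {μ : Measure X} {d D₁ D₂ : ℝ}
    (hreg : AhlforsRegular μ d D₁ D₂) (x : X) (r : ℝ) : μ (closedBall x r) < ∞ := by
  by_cases hr : ENNReal.ofReal r ≤ Metric.ediam (univ : Set X)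
  · refine (measure_mono (closedBall_subset_closedBall (le_max_left r 0))).trans_lt ?_
    refine ((hreg x _ (le_max_right r 0) ?_).2).trans_lt ofReal_lt_top
    rwa [ENNReal.ofReal_max, ENNReal.ofReal_zero, max_eq_left zero_le]
  · have hdiam : Metric.ediam (univ : Set X) ≠ ∞ := ne_top_of_lt (not_le.1 hr)
    have hball : closedBall x r ⊆ closedBall x (Metric.ediam (univ : Set X)).toReal :=
      fun z _ => mem_closedBall.2 <| by
        rw [dist_edist]
        exact ENNReal.toReal_mono hdiam (Metric.edist_le_ediam_of_mem (mem_univ _) (mem_univ _))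
    refine (measure_mono hball).trans_lt ((hreg x _ toReal_nonneg ?_).2.trans_lt ofReal_lt_top)
    exact (ofReal_toReal hdiam).le

theorem AhlforsRegular.sigmaFinite {μ : Measure X} {d D₁ D₂ : ℝ}
    (hreg : AhlforsRegular μ d D₁ D₂) : SigmaFinite μ := by
  rcases isEmpty_or_nonempty X with hX | ⟨⟨x₀⟩⟩
  · infer_instance
  refine Measure.sigmaFinite_of_countable (countable_range fun n : ℕ => closedBall x₀ n) ?_ ?_
  · rintro _ ⟨n, rfl⟩
    exact hreg.measure_closedBall_lt_top x₀ n
  · refine eq_univ_of_forall fun z => ⟨closedBall x₀ ⌈dist z x₀⌉₊, ⟨_, rfl⟩, ?_⟩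
    exact mem_closedBall.2 (Nat.le_ceil _)

section Schur

variable {α : Type*} [MeasurableSpace α] {μ : Measure α}

theorem lintegral_le_schurBound_left (A : α → α → ℝ≥0∞) (x : α) :
    ∫⁻ y, A x y ∂μ ≤ schurBound μ A :=
  (le_iSup (fun x => ∫⁻ y, A x y ∂μ) x).trans (le_max_left _ _)

theorem lintegral_le_schurBound_right (A : α → α → ℝ≥0∞) (y : α) :
    ∫⁻ x, A x y ∂μ ≤ schurBound μ A :=
  (le_iSup (fun y => ∫⁻ x, A x y ∂μ) y).trans (le_max_right _ _)

theorem schurBound_mono {A B : α → α → ℝ≥0∞} (hAB : ∀ x y, A x y ≤ B x y) :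
    schurBound μ A ≤ schurBound μ B :=
  max_le_max (iSup_mono fun x => lintegral_mono (hAB x))
    (iSup_mono fun y => lintegral_mono fun x => hAB x y)

/-- Hölder's inequality against the measure `f μ`. -/
theorem rpow_lintegral_mul_le {f g : α → ℝ≥0∞} (hf : AEMeasurable f μ) (hg : AEMeasurable g μ)
    {r : ℝ} (hr : 1 ≤ r) :
    (∫⁻ a, f a * g a ∂μ) ^ r ≤ (∫⁻ a, f a ∂μ) ^ (r - 1) * ∫⁻ a, f a * g a ^ r ∂μ := by
  have hr0 : 0 < r := one_pos.trans_le hr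
  have hsplit : ∀ a, f a * g a = f a ^ (1 - r⁻¹) * (f a * g a ^ r) ^ r⁻¹ := fun a => by
    rw [ENNReal.mul_rpow_of_nonneg _ _ (inv_nonneg.2 hr0.le), ← ENNReal.rpow_mul,
      mul_inv_cancel₀ hr0.ne', ENNReal.rpow_one, ← mul_assoc,
      ← ENNReal.rpow_add_of_nonneg _ _ (sub_nonneg.2 (inv_le_one_of_one_le₀ hr))
        (inv_nonneg.2 hr0.le), sub_add_cancel, ENNReal.rpow_one]
  have holder := ENNReal.lintegral_mul_norm_pow_le hf (hf.mul (hg.pow_const r))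
    (sub_nonneg.2 (inv_le_one_of_one_le₀ hr)) (inv_nonneg.2 hr0.le) (sub_add_cancel 1 r⁻¹)
  calc (∫⁻ a, f a * g a ∂μ) ^ r
      ≤ ((∫⁻ a, f a ∂μ) ^ (1 - r⁻¹) * (∫⁻ a, f a * g a ^ r ∂μ) ^ r⁻¹) ^ r := by
        simp_rw [hsplit]
        exact ENNReal.rpow_le_rpow holder hr0.le
    _ = (∫⁻ a, f a ∂μ) ^ (r - 1) * ∫⁻ a, f a * g a ^ r ∂μ := by
        rw [ENNReal.mul_rpow_of_nonneg _ _ hr0.le, ← ENNReal.rpow_mul, ← ENNReal.rpow_mul,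
          inv_mul_cancel₀ hr0.ne', ENNReal.rpow_one, sub_mul, one_mul, inv_mul_cancel₀ hr0.ne']

/-- Schur's test. -/
theorem lintegral_rpow_lintegral_mul_le [SFinite μ] {A : α → α → ℝ≥0∞}
    (hA : Measurable (Function.uncurry A)) {ψ : α → ℝ≥0∞} (hψ : AEMeasurable ψ μ)
    {r : ℝ} (hr : 1 ≤ r) :
    ∫⁻ x, (∫⁻ y, A x y * ψ y ∂μ) ^ r ∂μ ≤ schurBound μ A ^ r * ∫⁻ y, ψ y ^ r ∂μ := by
  set C := schurBound μ A
  have hC : C ^ (r - 1) * C = C ^ r := by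
    simpa using (ENNReal.rpow_add_of_nonneg (x := C) _ _ (sub_nonneg.2 hr) zero_le_one).symm
  calc ∫⁻ x, (∫⁻ y, A x y * ψ y ∂μ) ^ r ∂μ
      ≤ ∫⁻ x, C ^ (r - 1) * ∫⁻ y, A x y * ψ y ^ r ∂μ ∂μ := by
        refine lintegral_mono fun x =>
          (rpow_lintegral_mul_le hA.of_uncurry_left.aemeasurable hψ hr).trans ?_
        gcongr
        exact lintegral_le_schurBound_left A x
    _ = C ^ (r - 1) * ∫⁻ y, ∫⁻ x, A x y * ψ y ^ r ∂μ ∂μ := by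
        rw [lintegral_const_mul'' _ ?_, lintegral_lintegral_swap]
        · exact hA.aemeasurable.mul (hψ.pow_const r).comp_snd
        · exact (hA.aemeasurable.mul (hψ.pow_const r).comp_snd).lintegral_prod_right'
    _ ≤ C ^ (r - 1) * ∫⁻ y, C * ψ y ^ r ∂μ := by
        gcongr with y
        rw [lintegral_mul_const _ hA.of_uncurry_right]
        exact mul_le_mul_left (lintegral_le_schurBound_right A y) _
    _ = C ^ r * ∫⁻ y, ψ y ^ r ∂μ := by
        rw [lintegral_const_mul'' _ (hψ.pow_const r), ← mul_assoc, hC]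

theorem eLpNorm_lintegral_mul_le [SFinite μ] {A : α → α → ℝ≥0∞}
    (hA : Measurable (Function.uncurry A)) {ψ : α → ℝ≥0∞} (hψ : AEMeasurable ψ μ)
    {p : ℝ≥0∞} (hp : 1 ≤ p) :
    eLpNorm (fun x => ∫⁻ y, A x y * ψ y ∂μ) p μ ≤ schurBound μ A * eLpNorm ψ p μ := by
  rcases eq_or_ne p ∞ with rfl | hp_top
  · simp only [eLpNorm_exponent_top]
    refine essSup_le_of_ae_le _ (Eventually.of_forall fun x => ?_)
    calc ‖∫⁻ y, A x y * ψ y ∂μ‖ₑ = ∫⁻ y, A x y * ψ y ∂μ := enorm_eq_self _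
      _ ≤ ∫⁻ y, A x y * eLpNormEssSup ψ μ ∂μ :=
          lintegral_mono_ae (enorm_ae_le_eLpNormEssSup ψ μ |>.mono fun y hy => by
            gcongr; simpa only [enorm_eq_self] using hy)
      _ ≤ schurBound μ A * eLpNormEssSup ψ μ := by
          rw [lintegral_mul_const _ hA.of_uncurry_left]
          exact mul_le_mul_left (lintegral_le_schurBound_left A x) _
  have hp0 : p ≠ 0 := (zero_lt_one.trans_le hp).ne'
  have hr : 1 ≤ p.toReal := by simpa using ENNReal.toReal_mono hp_top hp
  have hr0 : 0 < p.toReal := one_pos.trans_le hr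
  simp only [eLpNorm_eq_lintegral_rpow_enorm_toReal hp0 hp_top, enorm_eq_self]
  calc (∫⁻ x, (∫⁻ y, A x y * ψ y ∂μ) ^ p.toReal ∂μ) ^ (1 / p.toReal)
      ≤ (schurBound μ A ^ p.toReal * ∫⁻ y, ψ y ^ p.toReal ∂μ) ^ (1 / p.toReal) :=
        ENNReal.rpow_le_rpow (lintegral_rpow_lintegral_mul_le hA hψ hr) (by positivity)
    _ = schurBound μ A * (∫⁻ y, ψ y ^ p.toReal ∂μ) ^ (1 / p.toReal) := by
        rw [ENNReal.mul_rpow_of_nonneg _ _ (by positivity), ← ENNReal.rpow_mul,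
          mul_one_div_cancel hr0.ne', ENNReal.rpow_one]

end Schur

theorem tsum_indicator_apply_of_mem {α ι M : Type*} [AddCommMonoid M] [TopologicalSpace M]
    {I : ι → Set α} (hI : Pairwise (Function.onFun Disjoint I)) (f : ι → α → M) {i : ι} {x : α}
    (hx : x ∈ I i) : ∑' j, (I j).indicator (f j) x = f i x := by
  rw [tsum_eq_single i fun j hj => indicator_of_notMem (disjoint_right.1 (hI hj) hx) _,
    indicator_of_mem hx]

/-- Also valid when `f` or `g` is not integrable, thanks to the junk value `∫ = 0`. -/
theorem enorm_integral_sub_integral_le {α E : Type*} [MeasurableSpace α] {μ : Measure α}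
    [NormedAddCommGroup E] [NormedSpace ℝ E] {f g : α → E}
    (hf : AEStronglyMeasurable f μ) (hg : AEStronglyMeasurable g μ) :
    ‖∫ a, f a ∂μ - ∫ a, g a ∂μ‖ₑ ≤ ∫⁻ a, ‖f a - g a‖ₑ ∂μ := by
  by_cases hfg : Integrable (fun a => f a - g a) μ
  · by_cases hg' : Integrable g μ
    · have hf' : Integrable f μ :=
        (hfg.add hg').congr (.of_forall fun a => sub_add_cancel (f a) (g a))
      rw [← integral_sub hf' hg']
      exact enorm_integral_le_lintegral_enorm _
    · have hf' : ¬Integrable f μ := fun hf' =>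
        hg' ((hf'.sub hfg).congr (.of_forall fun a => sub_sub_cancel (f a) (g a)))
      simp [integral_undef hf', integral_undef hg']
  · have hinf : ∫⁻ a, ‖f a - g a‖ₑ ∂μ = ∞ :=
      not_lt_top_iff.1 fun hlt => hfg ⟨hf.sub hg, hlt⟩
    simp [hinf]

theorem dHaus_nonneg {α : Type*} [MetricSpace α] (Γ A : Set α) : 0 ≤ dHaus Γ A :=
  Real.iSup_nonneg fun _ => Real.iSup_nonneg fun _ => infDist_nonneg

theorem infDist_le_dHaus {α : Type*} [MetricSpace α] {Γ A : Set α}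
    (hA : Bornology.IsBounded A) {x : α} (hx : x ∈ A) :
    infDist x Γ ≤ dHaus Γ A := by
  obtain ⟨C, hC⟩ := isBounded_iff.1 hA
  have hbdd : BddAbove (range fun y => ⨆ _ : y ∈ A, infDist y Γ) := by
    refine ⟨infDist x Γ + C, forall_mem_range.2 fun y => ?_⟩
    by_cases hy : y ∈ A
    · rw [ciSup_pos hy]
      linarith [infDist_le_infDist_add_dist (x := y) (y := x) (s := Γ), hC hy hx]
    · simp only [hy, Real.iSup_of_isEmpty]
      linarith [infDist_nonneg (x := x) (s := Γ), dist_nonneg.trans (hC hx hx)]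
  have hle := le_ciSup hbdd x
  rwa [ciSup_pos hx] at hle

theorem IsVoronoi.dist_le_dHaus {ι : Type*} {A : Set X} {γ : ι → X} {I : ι → Set X}
    (hV : IsVoronoi A γ I) (hA : Bornology.IsBounded A) {i : ι} {x : X} (hx : x ∈ I i) :
    dist x (γ i) ≤ dHaus (range γ) A := by
  obtain ⟨hxA, hdist⟩ := hV.2.2.2 i hx
  exact hdist ▸ infDist_le_dHaus hA hxA

theorem enorm_sub_le_moc {α : Type*} [MetricSpace α] (K : α → α → ℂ) {δ : ℝ} {x x' y y' : α}
    (hx : dist x' x ≤ δ) (hy : dist y' y ≤ δ) : ‖K x' y' - K x y‖ₑ ≤ moc K δ x y :=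
  le_iSup₂_of_le x' hx (le_iSup₂_of_le y' hy le_rfl)

theorem moc_zero {α : Type*} [MetricSpace α] (K : α → α → ℂ) : moc K 0 = 0 := by
  ext x y
  simp [moc]

theorem schurBound_moc_le (μ : Measure X) (K : X → X → ℂ) (θ : ℝ) {δ : ℝ} (hδ0 : 0 ≤ δ)
    (hδ1 : δ ≤ 1) : schurBound μ (moc K δ) ≤ ENNReal.ofReal (δ ^ θ) * schurSθ μ K θ := by
  rcases hδ0.eq_or_lt with rfl | hδ
  · simp [moc_zero, schurBound]
  have hterm : ENNReal.ofReal (δ ^ (-θ)) * schurBound μ (moc K δ) ≤ schurSθ μ K θ :=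
    le_add_left (le_iSup₂_of_le δ ⟨hδ, hδ1⟩ le_rfl)
  calc schurBound μ (moc K δ)
      = ENNReal.ofReal (δ ^ θ) * (ENNReal.ofReal (δ ^ (-θ)) * schurBound μ (moc K δ)) := by
        rw [← mul_assoc, ← ENNReal.ofReal_mul (Real.rpow_nonneg hδ0 θ), ← Real.rpow_add hδ,
          add_neg_cancel, Real.rpow_zero, ENNReal.ofReal_one, one_mul]
    _ ≤ ENNReal.ofReal (δ ^ θ) * schurSθ μ K θ := by gcongr

section Voronoi

variable {α ι : Type*} {K : α → α → ℂ} {γ : ι → α} {I : ι → Set α}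

/-- `|K_I(x, y) - K(x, y)|`, where `K_I(x, ·) = K(γ i, ·)` on the cell `I i`: the kernel of
`h ↦ h_I - h` on `V_p`. -/
def voronoiDefect (K : α → α → ℂ) (γ : ι → α) (I : ι → Set α) (x y : α) : ℝ≥0∞ :=
  ∑' i, (I i).indicator (fun x => ‖K (γ i) y - K x y‖ₑ) x

theorem measurable_voronoiDefect [MeasurableSpace α] [Countable ι]
    (hK : Measurable (Function.uncurry K)) (hI : ∀ i, MeasurableSet (I i)) :
    Measurable (Function.uncurry (voronoiDefect K γ I)) := by
  refine Measurable.tsum fun i => ?_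
  have hdiff : Measurable fun q : α × α => ‖K (γ i) q.2 - K q.1 q.2‖ₑ :=
    ((hK.comp (measurable_const.prodMk measurable_snd)).sub hK).enorm
  exact hdiff.indicator ((hI i).preimage measurable_fst)

theorem voronoiDefect_of_mem (hI : Pairwise (Function.onFun Disjoint I)) {i : ι} {x : α}
    (hx : x ∈ I i) (y : α) : voronoiDefect K γ I x y = ‖K (γ i) y - K x y‖ₑ :=
  tsum_indicator_apply_of_mem hI _ hx

theorem voronoiDefect_le_moc [MetricSpace α] (hI : Pairwise (Function.onFun Disjoint I)) {δ : ℝ}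
    (hδ : 0 ≤ δ) (hcell : ∀ i, ∀ x ∈ I i, dist x (γ i) ≤ δ) (x y : α) :
    voronoiDefect K γ I x y ≤ moc K δ x y := by
  by_cases hx : ∃ i, x ∈ I i
  · obtain ⟨i, hi⟩ := hx
    rw [voronoiDefect_of_mem hI hi]
    exact enorm_sub_le_moc K (by rw [dist_comm]; exact hcell i x hi) (by rwa [dist_self])
  · push Not at hx
    simp [voronoiDefect, indicator_of_notMem (hx _)]

theorem enorm_voronoiSample_sub_le [MeasurableSpace α] {μ : Measure α}
    (hK : Measurable (Function.uncurry K)) (hI : Pairwise (Function.onFun Disjoint I)) {h : α → ℂ}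
    (hh : AEStronglyMeasurable h μ) (hfix : intOp μ K h = h) {i : ι} {x : α} (hx : x ∈ I i) :
    ‖(∑' j, (I j).indicator (fun _ => h (γ j)) x) - h x‖ₑ
      ≤ ∫⁻ y, voronoiDefect K γ I x y * ‖h y‖ₑ ∂μ := by
  have hrepr : ∀ z, h z = ∫ y, K z y * h y ∂μ := fun z => (congrFun hfix z).symm
  rw [tsum_indicator_apply_of_mem hI _ hx, hrepr (γ i), hrepr x]
  have hmeas : ∀ z, AEStronglyMeasurable (fun y => K z y * h y) μ := fun z =>
    hK.of_uncurry_left.aestronglyMeasurable.mul hh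
  refine (enorm_integral_sub_integral_le (hmeas (γ i)) (hmeas x)).trans_eq
    (lintegral_congr fun y => ?_)
  rw [← sub_mul, enorm_mul, voronoiDefect_of_mem hI hx]

end Voronoi

theorem statement7_general {X : Type*} [MetricSpace X] [MeasurableSpace X]
    (μ : Measure X) (d D₁ D₂ : ℝ)
    (hreg : AhlforsRegular μ d D₁ D₂)
    (K : X → X → ℂ) (hKm : Measurable (Function.uncurry K))
    (θ : ℝ) (hK : schurSθ μ K θ < ∞)
    (p : ℝ≥0∞) (hp : 1 ≤ p)
    (Ω : Set X) (hΩb : Bornology.IsBounded Ω) (hΩm : MeasurableSet Ω)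
    {ι : Type*} [Countable ι]
    (γ : ι → X) (I : ι → Set X) (hV : IsVoronoi Ω γ I)
    (hdH : dHaus (Set.range γ) Ω ≤ 1) :
    ∀ h ∈ VSpace μ K p,
      eLpNorm (fun x => (∑' i, (I i).indicator (fun _ => h (γ i)) x) - h x) p
          (μ.restrict Ω) ≤
        ENNReal.ofReal ((schurSθ μ K θ).toReal * dHaus (Set.range γ) Ω ^ θ) *
          eLpNorm h p μ := by
  rintro h ⟨hmem, hfix⟩
  have := hreg.sigmaFinite
  set δ := dHaus (range γ) Ω
  have hcell : ∀ i, ∀ x ∈ I i, dist x (γ i) ≤ δ := fun i x hx => hV.dist_le_dHaus hΩb hx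
  obtain ⟨hImeas, hIdisj, hIunion, -⟩ := hV
  set G := fun x => ∫⁻ y, voronoiDefect K γ I x y * ‖h y‖ₑ ∂μ
  have hpointwise : ∀ᵐ x ∂μ.restrict Ω,
      ‖(∑' i, (I i).indicator (fun _ => h (γ i)) x) - h x‖ₑ ≤ ‖G x‖ₑ := by
    refine ae_restrict_of_forall_mem hΩm fun x hx => ?_
    obtain ⟨i, hi⟩ := mem_iUnion.1 (hIunion ▸ hx)
    exact enorm_voronoiSample_sub_le hKm hIdisj hmem.1 hfix hi
  calc _ ≤ eLpNorm G p (μ.restrict Ω) := eLpNorm_mono_enorm_ae hpointwise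
    _ ≤ eLpNorm G p μ := eLpNorm_mono_measure _ Measure.restrict_le_self
    _ ≤ schurBound μ (voronoiDefect K γ I) * eLpNorm h p μ := by
        simpa only [eLpNorm_enorm] using
          eLpNorm_lintegral_mul_le (measurable_voronoiDefect hKm hImeas) hmem.1.enorm hp
    _ ≤ ENNReal.ofReal (δ ^ θ) * schurSθ μ K θ * eLpNorm h p μ := by
        gcongr
        exact (schurBound_mono (voronoiDefect_le_moc hIdisj (dHaus_nonneg _ _) hcell)).trans
          (schurBound_moc_le μ K θ (dHaus_nonneg _ _) hdH)
    _ = _ := by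
        rw [ENNReal.ofReal_mul toReal_nonneg, ofReal_toReal hK.ne, mul_comm (schurSθ μ K θ)]

theorem statement7 {X : Type*} [MetricSpace X] [MeasurableSpace X] [BorelSpace X]
    (μ : Measure X) (d D₁ D₂ : ℝ) (hd : 0 < d) (hD₁ : 0 < D₁) (hD₂ : 0 < D₂)
    (hreg : AhlforsRegular μ d D₁ D₂)
    (K : X → X → ℂ) (hKm : Measurable (Function.uncurry K))
    (θ : ℝ) (hθ0 : 0 < θ) (hθ1 : θ ≤ 1) (hK : schurSθ μ K θ < ∞)
    (p : ℝ≥0∞) (hp : 1 ≤ p)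
    (hT : ∀ f : X → ℂ, MemLp f p μ → intOp μ K (intOp μ K f) = intOp μ K f)
    (Ω : Set X) (hΩb : Bornology.IsBounded Ω) (hΩm : MeasurableSet Ω)
    {ι : Type*} [Countable ι]
    (γ : ι → X) (hγ : Set.range γ ⊆ Ω) (I : ι → Set X) (hV : IsVoronoi Ω γ I)
    (hdH : dHaus (Set.range γ) Ω ≤ 1) :
    ∀ h ∈ VSpace μ K p,
      eLpNorm (fun x => (∑' i, (I i).indicator (fun _ => h (γ i)) x) - h x) p
          (μ.restrict Ω) ≤
        ENNReal.ofReal ((schurSθ μ K θ).toReal * dHaus (Set.range γ) Ω ^ θ) *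
          eLpNorm h p μ :=
  statement7_general μ d D₁ D₂ hreg K hKm θ hK p hp Ω hΩb hΩm γ I hV hdH

end
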